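/- arXiv:1811.08776 — 2 statements merged into one kernel-verified Lean document; each statement's English description precedes it below -/
import Mathlib

section
/- Let T be a tree of even order n ≥ 2 with Randić matrix R. Assuming R_{−1}(T) ≤ (5n+8)/18 and that 1 and −1 are eigenvalues of R, then RE(T) ≤ √((n−2)·(5n−10)/9) + 2. -/
open scoped Classical

noncomputable def randicMatrix {V : Type*} [Fintype V] (G : SimpleGraph V)
    [DecidableRel G.Adj] : Matrix V V ℝ :=
  fun u v =>
    if G.Adj u v then 1 / Real.sqrt ((G.degree u : ℝ) * (G.degree v : ℝ)) else 0

noncomputable def randicIndex {V : Type*} [Fintype V] (G : SimpleGraph V)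
    [DecidableRel G.Adj] : ℝ :=
  (1 / 2) * ∑ u, ∑ v, if G.Adj u v then 1 / ((G.degree u : ℝ) * (G.degree v : ℝ)) else 0

/-!
Since `R` is symmetric, `tr R² = Σ λᵢ²`, and `tr R²` is twice the Randić index `R_{-1}(T)`; the
hypothesis on `R_{-1}(T)` therefore gives `Σ λᵢ² ≤ (5n + 8)/9`. The eigenvalues `1` and `-1`
contribute `2` to both `Σ λᵢ²` and `Σ |λᵢ|`, and Cauchy–Schwarz on the remaining `n - 2`
eigenvalues bounds their contribution to the energy by `√((n - 2)(5n - 10)/9)`.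
-/

open Finset

theorem Matrix.IsHermitian.trace_mul_self_eq_sum_sq_eigenvalues {𝕜 n : Type*} [RCLike 𝕜]
    [Fintype n] [DecidableEq n] {A : Matrix n n 𝕜} (hA : A.IsHermitian) :
    (A * A).trace = ∑ i, (hA.eigenvalues i : 𝕜) ^ 2 := by
  conv_lhs => rw [hA.spectral_theorem, ← map_mul, Unitary.conjStarAlgAut_apply,
    Matrix.trace_mul_cycle, Unitary.coe_star_mul_self, one_mul, Matrix.diagonal_mul_diagonal,
    Matrix.trace_diagonal]
  simp [sq]

theorem trace_randicMatrix_mul_self {V : Type*} [Fintype V] (G : SimpleGraph V)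
    [DecidableRel G.Adj] :
    (randicMatrix G * randicMatrix G).trace = 2 * randicIndex G := by
  rw [Matrix.trace, randicIndex, ← mul_assoc, show (2 : ℝ) * (1 / 2) = 1 by norm_num, one_mul]
  refine sum_congr rfl fun u _ => ?_
  rw [Matrix.diag_apply, Matrix.mul_apply]
  refine sum_congr rfl fun v _ => ?_
  by_cases h : G.Adj u v
  · simp only [randicMatrix, if_pos h, if_pos h.symm]
    rw [mul_comm (G.degree v : ℝ), div_mul_div_comm, one_mul,
      Real.mul_self_sqrt (by positivity)]
  · simp [randicMatrix, h]

theorem sum_abs_le_sqrt_add_two_of_abs_eq_one {ι : Type*} [Fintype ι] (f : ι → ℝ) {i j : ι}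
    (hij : i ≠ j) (hi : |f i| = 1) (hj : |f j| = 1) {b : ℝ}
    (hsq : ∑ k, f k ^ 2 ≤ 2 + b) :
    ∑ k, |f k| ≤ √((Fintype.card ι - 2) * b) + 2 := by
  set s : Finset ι := {i, j}ᶜ
  have hcard : (#s : ℝ) = Fintype.card ι - 2 := by
    have h := card_compl_add_card ({i, j} : Finset ι)
    rw [card_pair hij] at h
    rw [eq_sub_iff_add_eq]
    exact_mod_cast h
  have hsplit (g : ι → ℝ) : ∑ k, g k = ∑ k ∈ s, g k + (g i + g j) := by
    rw [← sum_pair hij, sum_compl_add_sum]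
  have habs : ∑ k, |f k| = ∑ k ∈ s, |f k| + 2 := by
    rw [hsplit, hi, hj]; norm_num
  have hrest : ∑ k ∈ s, |f k| ^ 2 ≤ b := by
    have hsq' := hsplit (fun k => f k ^ 2) ▸ hsq
    rw [← sq_abs (f i), ← sq_abs (f j), hi, hj] at hsq'
    simp only [sq_abs]
    linarith
  rw [habs, ← hcard, add_le_add_iff_right]
  apply Real.le_sqrt_of_sq_le
  calc (∑ k ∈ s, |f k|) ^ 2 ≤ #s * ∑ k ∈ s, |f k| ^ 2 := sq_sum_le_card_mul_sum_sq
    _ ≤ #s * b := by gcongr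

theorem randic_energy_bound_tree_even_general {V : Type*} [Fintype V]
    (G : SimpleGraph V) [DecidableRel G.Adj] (n : ℕ)
    (hn : Fintype.card V = n)
    (hR : (randicMatrix G).IsHermitian)
    (hRI : randicIndex G ≤ (5 * (n : ℝ) + 8) / 18)
    (h1 : ∃ i, hR.eigenvalues i = 1) (hneg1 : ∃ i, hR.eigenvalues i = -1) :
    ∑ i, |hR.eigenvalues i| ≤
      Real.sqrt (((n : ℝ) - 2) * (5 * (n : ℝ) - 10) / 9) + 2 := by
  obtain ⟨i, hi⟩ := h1
  obtain ⟨j, hj⟩ := hneg1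
  have hij : i ≠ j := fun h => by norm_num [h, hj] at hi
  have hsq : ∑ k, hR.eigenvalues k ^ 2 ≤ 2 + (5 * (n : ℝ) - 10) / 9 := by
    have htrace := hR.trace_mul_self_eq_sum_sq_eigenvalues
    rw [trace_randicMatrix_mul_self] at htrace
    simp only [RCLike.ofReal_real_eq_id, id] at htrace
    linarith
  have henergy := sum_abs_le_sqrt_add_two_of_abs_eq_one _ hij (by simp [hi]) (by simp [hj]) hsq
  rwa [hn, ← mul_div_assoc] at henergy

theorem randic_energy_bound_tree_even {V : Type*} [Fintype V]
    (G : SimpleGraph V) [DecidableRel G.Adj] (n : ℕ)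
    (hn : Fintype.card V = n) (hn2 : 2 ≤ n) (heven : Even n)
    (htree : G.IsTree)
    (hR : (randicMatrix G).IsHermitian)
    (hRI : randicIndex G ≤ (5 * (n : ℝ) + 8) / 18)
    (h1 : ∃ i, hR.eigenvalues i = 1) (hneg1 : ∃ i, hR.eigenvalues i = -1) :
    ∑ i, |hR.eigenvalues i| ≤
      Real.sqrt (((n : ℝ) - 2) * (5 * (n : ℝ) - 10) / 9) + 2 :=
  randic_energy_bound_tree_even_general G n hn hR hRI h1 hneg1
end

section
/- Let G be a connected TB graph on n ≥ 3 vertices (bipartite with parts A, B, each vertex of B of degree 1 or 2) whose Randić matrix has nullity at least 1. Then RE(G) ≤ (n−3)·(√2)/2 + 2. -/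
/-!
For degrees `x, y > 0` with `(x - 2) * (y - 2) ≤ 0` one has `1/(xy) ≤ 1/(2x) + 1/(2y) - 1/4`.
In a connected TB graph on `n ≥ 3` vertices every edge satisfies this (a vertex of `B` has
degree 1 or 2, and a leaf of `B` cannot hang on a leaf), so summing over the `m` edges gives
`R₋₁(G) ≤ n/2 - m/4 ≤ (n + 1)/4`, i.e. `∑ λᵢ² = tr(R²) ≤ (n + 1)/2`.
The vector `(√dᵥ)` is an eigenvector of `R` for `1` and, flipping its sign on `B`, one for `-1`.
Together with an eigenvalue `0`, the remaining `n - 3` eigenvalues have square sum at most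
`(n - 3)/2`, so by Cauchy–Schwarz their absolute values sum to at most `(n - 3)/√2`.
-/

open scoped Classical

open Finset Matrix

namespace Matrix.IsHermitian

variable {𝕜 n : Type*} [RCLike 𝕜] [Fintype n] [DecidableEq n] {A : Matrix n n 𝕜}

theorem trace_mul_self_eq_sum_sq_eigenvalues_s19 (hA : A.IsHermitian) :
    (A * A).trace = ∑ i, (hA.eigenvalues i : 𝕜) ^ 2 := by
  conv_lhs => rw [hA.spectral_theorem, ← map_mul, Unitary.conjStarAlgAut_apply, trace_mul_cycle,
    Unitary.coe_star_mul_self, one_mul, diagonal_mul_diagonal, trace_diagonal]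
  simp [sq]

theorem exists_eigenvalues_eq_of_mulVec_eq_smul (hA : A.IsHermitian) {v : n → 𝕜} (hv : v ≠ 0)
    {t : ℝ} (h : A *ᵥ v = (t : 𝕜) • v) : ∃ i, hA.eigenvalues i = t := by
  have : Module.End.HasEigenvalue A.toLin' (t : 𝕜) :=
    Module.End.hasEigenvalue_of_hasEigenvector
      ⟨by rwa [Module.End.mem_eigenspace_iff, toLin'_apply], hv⟩
  rw [← Set.mem_range, ← hA.spectrum_real_eq_range_eigenvalues, ← spectrum.algebraMap_mem_iff 𝕜,
    ← spectrum_toLin']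
  exact this.mem_spectrum

end Matrix.IsHermitian

theorem one_div_mul_le_of_sub_two_mul_sub_two_nonpos {x y : ℝ} (hx : 0 < x) (hy : 0 < y)
    (h : (x - 2) * (y - 2) ≤ 0) : 1 / (x * y) ≤ 1 / (2 * x) + 1 / (2 * y) - 1 / 4 := by
  rw [div_add_div _ _ (by positivity) (by positivity),
    div_sub_div _ _ (by positivity) (by positivity),
    div_le_div_iff₀ (by positivity) (by positivity)]
  nlinarith [mul_pos hx hy]

theorem sum_abs_le_of_sum_sq_le {ι : Type*} [Fintype ι] {f : ι → ℝ} {i₀ i₁ i₂ : ι}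
    (h₀ : f i₀ = 0) (h₁ : f i₁ = 1) (h₂ : f i₂ = -1)
    (hsq : ∑ i, f i ^ 2 ≤ (Fintype.card ι + 1) / 2) :
    ∑ i, |f i| ≤ (Fintype.card ι - 3) * √2 / 2 + 2 := by
  have h₀₁ : i₀ ≠ i₁ := fun h => by simp [h, h₁] at h₀
  have h₀₂ : i₀ ≠ i₂ := fun h => by simp [h, h₂] at h₀
  have h₁₂ : i₁ ≠ i₂ := fun h => by norm_num [h, h₂] at h₁
  set t : Finset ι := {i₀, i₁, i₂}
  have hsum_t (g : ℝ → ℝ) : ∑ i ∈ t, g (f i) = g 0 + g 1 + g (-1) := by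
    rw [sum_insert (by simp [h₀₁, h₀₂]), sum_pair h₁₂, h₀, h₁, h₂, add_assoc]
  have hcard : (#tᶜ : ℝ) = Fintype.card ι - 3 := by
    have ht : #t = 3 := card_eq_three.mpr ⟨i₀, i₁, i₂, h₀₁, h₀₂, h₁₂, rfl⟩
    rw [card_compl, ht, Nat.cast_sub (ht ▸ card_le_univ t)]
    norm_num
  have hsq_compl : ∑ i ∈ tᶜ, f i ^ 2 ≤ #tᶜ / 2 := by
    rw [← sum_add_sum_compl t, hsum_t (· ^ 2)] at hsq
    rw [hcard]
    norm_num at hsq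
    linarith
  have hcs : (∑ i ∈ tᶜ, |f i|) ^ 2 ≤ (#tᶜ * √2 / 2) ^ 2 := by
    calc (∑ i ∈ tᶜ, |f i|) ^ 2 ≤ #tᶜ * ∑ i ∈ tᶜ, f i ^ 2 := by
          simpa only [sq_abs] using sq_sum_le_card_mul_sum_sq (s := tᶜ) (f := fun i => |f i|)
      _ ≤ #tᶜ * (#tᶜ / 2) := by gcongr
      _ = (#tᶜ * √2 / 2) ^ 2 := by
          rw [div_pow, mul_pow, Real.sq_sqrt zero_le_two]
          ring
  have habs_compl : ∑ i ∈ tᶜ, |f i| ≤ #tᶜ * √2 / 2 :=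
    (pow_le_pow_iff_left₀ (by positivity) (by positivity) two_ne_zero).mp hcs
  rw [← sum_add_sum_compl t, hsum_t (|·|), ← hcard]
  norm_num
  linarith

namespace SimpleGraph

variable {V : Type*} [Fintype V] {G : SimpleGraph V} [DecidableRel G.Adj]

theorem Connected.two_le_degree_of_adj_of_degree_eq_one (hG : G.Connected)
    (hV : 3 ≤ Fintype.card V) {u v : V} (huv : G.Adj u v) (hv : G.degree v = 1) :
    2 ≤ G.degree u := by
  by_contra! hu
  have hu : G.degree u = 1 := by
    have := (G.degree_pos_iff_exists_adj u).mpr ⟨v, huv⟩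
    omega
  have only_v : ∀ x, G.Adj u x → x = v := fun x hx =>
    (degree_eq_one_iff_existsUnique_adj.mp hu).unique hx huv
  have only_u : ∀ x, G.Adj v x → x = u := fun x hx =>
    (degree_eq_one_iff_existsUnique_adj.mp hv).unique hx huv.symm
  -- `{u, v}` is closed under adjacency, so a walk from `u` to a third vertex cannot leave it.
  obtain ⟨w, -, hw⟩ := exists_mem_notMem_of_card_lt_card
    (s := {u, v}) (t := univ) (card_le_two.trans_lt (by rwa [card_univ]))
  obtain ⟨d, -, hd_fst, hd_snd⟩ :=
    (hG.preconnected u w).some.exists_boundary_dart {u, v} (by simp) (by simpa using hw)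
  rcases hd_fst with h | h
  · exact hd_snd (Or.inr (only_v _ (h ▸ d.adj)))
  · exact hd_snd (Or.inl (only_u _ (h ▸ d.adj)))

theorem Connected.degree_sub_two_mul_degree_sub_two_nonpos (hG : G.Connected)
    (hV : 3 ≤ Fintype.card V) {u v : V} (huv : G.Adj u v)
    (hv : G.degree v = 1 ∨ G.degree v = 2) :
    ((G.degree u : ℝ) - 2) * ((G.degree v : ℝ) - 2) ≤ 0 := by
  rcases hv with hv | hv
  · have : (2 : ℝ) ≤ G.degree u := by
      exact_mod_cast hG.two_le_degree_of_adj_of_degree_eq_one hV huv hv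
    rw [hv]
    push_cast
    linarith
  · simp [hv]

theorem Connected.card_le_card_edgeFinset_add_one (hG : G.Connected) :
    Fintype.card V ≤ #G.edgeFinset + 1 := by
  simpa only [Nat.card_eq_fintype_card, edgeFinset_card] using hG.card_vert_le_card_edgeSet_add_one

variable (G)

theorem sum_ite_adj_eq_sum_neighborFinset (v : V) (f : V → ℝ) :
    ∑ u, (if G.Adj v u then f u else 0) = ∑ u ∈ G.neighborFinset v, f u := by
  rw [← sum_filter, neighborFinset_eq_filter]

theorem randicMatrix_mulVec_eq_smul {s : V → ℝ} {c : ℝ} (hs : ∀ v u, G.Adj v u → s u = c * s v) :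
    randicMatrix G *ᵥ (fun v => s v * √(G.degree v)) = c • fun v => s v * √(G.degree v) := by
  funext v
  have hterm : ∀ u ∈ G.neighborFinset v,
      1 / √((G.degree v : ℝ) * G.degree u) * (s u * √(G.degree u)) = c * s v / √(G.degree v) := by
    intro u hu
    rw [mem_neighborFinset] at hu
    have : (0 : ℝ) < G.degree u := by
      exact_mod_cast (G.degree_pos_iff_exists_adj u).mpr ⟨v, hu.symm⟩
    rw [hs v u hu, Real.sqrt_mul (Nat.cast_nonneg _)]
    field_simp
  simp only [mulVec, dotProduct, randicMatrix, ite_mul, zero_mul,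
    sum_ite_adj_eq_sum_neighborFinset]
  rw [sum_congr rfl hterm, sum_const, card_neighborFinset_eq_degree, nsmul_eq_mul, Pi.smul_apply,
    smul_eq_mul]
  calc _ = c * (s v * (G.degree v / √(G.degree v))) := by ring
    _ = _ := by rw [Real.div_sqrt]

theorem randicMatrix_exists_eigenvalues_eq [Nonempty V] (hR : (randicMatrix G).IsHermitian)
    (hdeg : ∀ v, 0 < G.degree v) {s : V → ℝ} (hs₀ : ∀ v, s v ≠ 0) {c : ℝ}
    (hs : ∀ v u, G.Adj v u → s u = c * s v) : ∃ i, hR.eigenvalues i = c := by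
  refine hR.exists_eigenvalues_eq_of_mulVec_eq_smul ?_ (G.randicMatrix_mulVec_eq_smul hs)
  obtain ⟨v⟩ := ‹Nonempty V›
  exact Function.ne_iff.mpr ⟨v, mul_ne_zero (hs₀ v) (by have := hdeg v; positivity)⟩

theorem trace_randicMatrix_mul_self :
    (randicMatrix G * randicMatrix G).trace = 2 * randicIndex G := by
  rw [randicIndex, ← mul_assoc, show (2 : ℝ) * (1 / 2) = 1 by norm_num, one_mul]
  refine sum_congr rfl fun u _ => sum_congr rfl fun v _ => ?_
  by_cases h : G.Adj u v
  · simp only [randicMatrix, if_pos h, if_pos h.symm, mul_comm (G.degree v : ℝ)]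
    rw [one_div_mul_one_div, Real.mul_self_sqrt (by positivity)]
  · simp [randicMatrix, h]

theorem randicIndex_le (hdeg : ∀ v, 0 < G.degree v)
    (h : ∀ u v, G.Adj u v → ((G.degree u : ℝ) - 2) * ((G.degree v : ℝ) - 2) ≤ 0) :
    randicIndex G ≤ Fintype.card V / 2 - #G.edgeFinset / 4 := by
  -- The edge bound reads `1 / (d u * d v) ≤ g u + g v`, and `g u` is collected `d u` times.
  set g : V → ℝ := fun u => 1 / (2 * G.degree u) - 1 / 8
  have hsum_left : ∀ f : V → ℝ,
      ∑ u, ∑ v, (if G.Adj u v then f u else 0) = ∑ u, G.degree u * f u := by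
    intro f
    simp only [sum_ite_adj_eq_sum_neighborFinset, sum_const, card_neighborFinset_eq_degree,
      nsmul_eq_mul]
  have hsum_right : ∀ f : V → ℝ,
      ∑ u, ∑ v, (if G.Adj u v then f v else 0) = ∑ u, ∑ v, (if G.Adj u v then f u else 0) := by
    intro f
    rw [sum_comm]
    simp_rw [G.adj_comm]
  have hdeg_sum : ∑ u, (G.degree u : ℝ) = 2 * #G.edgeFinset := by
    exact_mod_cast G.sum_degrees_eq_twice_card_edges
  calc randicIndex G
      ≤ 1 / 2 * ∑ u, ∑ v, (if G.Adj u v then g u + g v else 0) := by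
        unfold randicIndex
        gcongr with u _ v _
        split_ifs with huv
        · have hu : (0 : ℝ) < G.degree u := by exact_mod_cast hdeg u
          have hv : (0 : ℝ) < G.degree v := by exact_mod_cast hdeg v
          simp only [g]
          linarith [one_div_mul_le_of_sub_two_mul_sub_two_nonpos hu hv (h u v huv)]
        · rfl
    _ = ∑ u, G.degree u * g u := by
        simp only [ite_add_zero, sum_add_distrib, hsum_right, hsum_left]
        ring
    _ = Fintype.card V / 2 - #G.edgeFinset / 4 := by
        have hg : ∀ u, (G.degree u : ℝ) * g u = 1 / 2 - G.degree u / 8 := by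
          intro u
          have : (0 : ℝ) < G.degree u := by exact_mod_cast hdeg u
          simp only [g]
          field_simp
        simp only [hg, sum_sub_distrib, ← sum_div, hdeg_sum, sum_const, card_univ, nsmul_eq_mul]
        ring

end SimpleGraph

theorem TB_energy_bound {A B : Type*} [Fintype A] [Fintype B]
    (G : SimpleGraph (A ⊕ B)) [DecidableRel G.Adj] (n : ℕ)
    (hn : Fintype.card (A ⊕ B) = n) (hn3 : 3 ≤ n)
    (hconn : G.Connected)
    (hA : ∀ a a' : A, ¬ G.Adj (Sum.inl a) (Sum.inl a'))
    (hB : ∀ b b' : B, ¬ G.Adj (Sum.inr b) (Sum.inr b'))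
    (hdegB : ∀ b : B, G.degree (Sum.inr b) = 1 ∨ G.degree (Sum.inr b) = 2)
    (hR : (randicMatrix G).IsHermitian)
    (hnull : 1 ≤ (Finset.univ.filter fun i => hR.eigenvalues i = 0).card) :
    ∑ i, |hR.eigenvalues i| ≤ ((n : ℝ) - 3) * Real.sqrt 2 / 2 + 2 := by
  subst hn
  have : Nontrivial (A ⊕ B) := Fintype.one_lt_card_iff_nontrivial.mp (by omega)
  have hdeg : ∀ v, 0 < G.degree v := fun v => hconn.preconnected.degree_pos_of_nontrivial v
  have hedge : ∀ u v, G.Adj u v → ((G.degree u : ℝ) - 2) * ((G.degree v : ℝ) - 2) ≤ 0 := by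
    rintro (a | b) (a' | b') h
    · exact absurd h (hA a a')
    · exact hconn.degree_sub_two_mul_degree_sub_two_nonpos hn3 h (hdegB b')
    · rw [mul_comm]
      exact hconn.degree_sub_two_mul_degree_sub_two_nonpos hn3 h.symm (hdegB b)
    · exact absurd h (hB b b')
  have htrace : ∑ i, hR.eigenvalues i ^ 2 ≤ (Fintype.card (A ⊕ B) + 1) / 2 := by
    have := hR.trace_mul_self_eq_sum_sq_eigenvalues_s19
    simp only [RCLike.ofReal_real_eq_id, id] at this
    rw [← this, G.trace_randicMatrix_mul_self]
    have : (Fintype.card (A ⊕ B) : ℝ) ≤ #G.edgeFinset + 1 := by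
      exact_mod_cast hconn.card_le_card_edgeFinset_add_one
    linarith [G.randicIndex_le hdeg hedge]
  obtain ⟨i₀, hi₀⟩ := card_pos.mp hnull
  obtain ⟨i₁, h₁⟩ := G.randicMatrix_exists_eigenvalues_eq hR hdeg (s := 1) (c := 1)
    (fun _ => one_ne_zero) (fun _ _ _ => by simp)
  obtain ⟨i₂, h₂⟩ := G.randicMatrix_exists_eigenvalues_eq hR hdeg (s := Sum.elim 1 (-1))
    (c := -1) (by rintro (a | b) <;> simp) (by
      rintro (a | b) (a' | b') h
      · exact absurd h (hA a a')
      · simp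
      · simp
      · exact absurd h (hB b b'))
  exact sum_abs_le_of_sum_sq_le (mem_filter.mp hi₀).2 h₁ h₂ htrace
end
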